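/- arXiv:2307.00091 — 2 statements merged into one kernel-verified Lean document; each statement's English description precedes it below -/
import Mathlib

section
/- Let r ≥ 2, k = 2, and e be integers with 0 < e ≤ r. If −k − 2er + (e² − 1)/k + kr² < 0 (with (e²−1)/k ∈ ℚ, i.e. 2·(−2 − 2er + (e²−1)/2 + 2r²) < 0 as rationals), then e = r; and then the integrality of 2a − (r² + 3)/(2r) for some integer a forces r to divide 3, hence r = 3; but then −2 − 2·9 + (9−1)/2 + 2·9 = 2 > 0, a contradiction. Hence there are no such integers. -/
/-!
Doubling the pairing gives `(2r - e)² - 5`, so negativity means `|2r - e| ≤ 2`. Since `e ≤ r`,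
`2r - e ≥ r ≥ 2`, which forces `r = e = 2`. But then `(r² + 3)/(2r) = 7/4`, and `2a - 7/4` is
never an integer.
-/

theorem wall_pairing_eq (r e : ℚ) :
    -2 - 2 * e * r + (e ^ 2 - 1) / 2 + 2 * r ^ 2 = ((2 * r - e) ^ 2 - 5) / 2 := by
  ring

theorem eq_two_of_sq_two_mul_sub_lt_five {r e : ℤ} (hr : 2 ≤ r) (her : e ≤ r)
    (h : (2 * r - e) ^ 2 < 5) : r = 2 ∧ e = 2 := by
  have hlt : 2 * r - e < 3 := by nlinarith
  omega

theorem intCast_ne_two_mul_sub_seven_div_four (a m : ℤ) : (m : ℚ) ≠ 2 * a - 7 / 4 := by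
  intro h
  have h4 : ((4 * m : ℤ) : ℚ) = ((8 * a - 7 : ℤ) : ℚ) := by push_cast; linarith
  have := Int.cast_injective h4
  omega

/-- Case `k = 2` in the wall analysis of Theorem 7: there are no integers
`r ≥ 2`, `0 < e ≤ r`, `a`, `m` with `-2 - 2er + (e²-1)/2 + 2r² < 0` and
`m = 2a - (r² + 3)/(2r)`. -/
theorem stmt_7 :
    ¬ ∃ (r e a m : ℤ), 2 ≤ r ∧ 0 < e ∧ e ≤ r ∧
      ((-2 : ℚ) - 2 * (e : ℚ) * r + ((e : ℚ) ^ 2 - 1) / 2 + 2 * (r : ℚ) ^ 2 < 0) ∧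
      ((m : ℚ) = 2 * (a : ℚ) - ((r : ℚ) ^ 2 + 3) / (2 * r)) := by
  rintro ⟨r, e, a, m, hr, -, her, hneg, hm⟩
  rw [wall_pairing_eq] at hneg
  have hsq : (2 * r - e) ^ 2 < 5 := by
    have : ((2 * r - e : ℤ) : ℚ) ^ 2 < 5 := by push_cast; linarith
    exact_mod_cast this
  obtain ⟨rfl, rfl⟩ := eq_two_of_sq_two_mul_sub_lt_five hr her hsq
  norm_num at hm
  exact intCast_ne_two_mul_sub_seven_div_four a m hm
end

section
/- Let r ≥ 2, k ≥ 5/2 be a half-integer, and e a rational with 0 < e ≤ r. Then the quantity P = −k − 2er + (e² − 1)/k + kr² satisfies P > −9/10; hence if P is a negative integer, no such k exists (since P ∈ ℤ and −9/10 < P < 0 is impossible). -/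
section LinearOrderedField

variable {K : Type*} [Field K] [LinearOrder K] [IsStrictOrderedRing K]

theorem lt_sub_two_mul_add_div_of_le {k e r : K} (hk : 0 < k) (hr : 0 ≤ r) (he : 0 < e)
    (her : e ≤ r) :
    k * r ^ 2 - k - 2 * r ^ 2 - 1 / k < -k - 2 * e * r + (e ^ 2 - 1) / k + k * r ^ 2 := by
  have her' : e * r ≤ r ^ 2 := by nlinarith
  have he2 : 0 < e ^ 2 / k := by positivity
  rw [sub_div]
  linarith

theorem neg_nine_div_ten_le_of_le {k r : K} (hk : 5 / 2 ≤ k) (hr : 2 ≤ r) :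
    -9 / 10 ≤ k * r ^ 2 - k - 2 * r ^ 2 - 1 / k := by
  have hk0 : 0 < k := by linarith
  have hr2 : 4 * (k - 2) ≤ (k - 2) * r ^ 2 := by
    rw [mul_comm]
    exact mul_le_mul_of_nonneg_left (by nlinarith) (by linarith)
  -- the right-hand side is at least `3k - 8 - 1/k`, which is `-9/10` at `k = 5/2`
  have hinv : 1 / k ≤ 2 / 5 := by
    rw [div_le_div_iff₀ hk0 (by norm_num)]
    linarith
  linarith

end LinearOrderedField

theorem Int.cast_nonneg_of_neg_one_lt {K : Type*} [Ring K] [LinearOrder K]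
    [IsStrictOrderedRing K] {n : ℤ} (hn : -1 < (n : K)) : 0 ≤ (n : K) := by
  have : -1 < n := by exact_mod_cast hn
  exact_mod_cast (show 0 ≤ n by omega)

theorem stmt_14_general (r : ℤ) (k e : ℚ) (hr : 2 ≤ r)
    (hk2 : 5 / 2 ≤ k)
    (he : 0 < e) (her : e ≤ (r : ℚ)) :
    -9 / 10 < -k - 2 * e * r + (e ^ 2 - 1) / k + k * (r : ℚ) ^ 2 ∧
    ¬ ∃ n : ℤ, (n : ℚ) = -k - 2 * e * r + (e ^ 2 - 1) / k + k * (r : ℚ) ^ 2 ∧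
        (n : ℚ) < 0 := by
  have hrq : (2 : ℚ) ≤ r := by exact_mod_cast hr
  have hP : -9 / 10 < -k - 2 * e * r + (e ^ 2 - 1) / k + k * (r : ℚ) ^ 2 :=
    (neg_nine_div_ten_le_of_le hk2 hrq).trans_lt
      (lt_sub_two_mul_add_div_of_le (by linarith) (by linarith) he her)
  refine ⟨hP, ?_⟩
  rintro ⟨n, hn, hneg⟩
  exact hneg.not_ge (Int.cast_nonneg_of_neg_one_lt (by linarith))

/-- Step 3 of Theorem 7: for a half-integer `k ≥ 5/2`, an integer `r ≥ 2` and a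
rational `0 < e ≤ r`, the quantity `P = -k - 2er + (e² - 1)/k + kr²` satisfies
`P > -9/10`; hence `P` cannot be a negative integer. -/
theorem stmt_14 (r : ℤ) (k e : ℚ) (hr : 2 ≤ r)
    (hk : ∃ k₁ : ℤ, 2 * k = (k₁ : ℚ)) (hk2 : 5 / 2 ≤ k)
    (he : 0 < e) (her : e ≤ (r : ℚ)) :
    -9 / 10 < -k - 2 * e * r + (e ^ 2 - 1) / k + k * (r : ℚ) ^ 2 ∧
    ¬ ∃ n : ℤ, (n : ℚ) = -k - 2 * e * r + (e ^ 2 - 1) / k + k * (r : ℚ) ^ 2 ∧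
        (n : ℚ) < 0 :=
  stmt_14_general r k e hr hk2 he her
end
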